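/- Let G be a group, n ≥ 3, E the set of idempotents of End F_n(G), and IG(E) the free idempotent generated monoid over E. Let u ∈ G and let a, b : {1,…,n} → G with a(1) = b(1) = 1 and indices j, k ∈ {1,…,n} satisfy a(j) = u⁻¹ and b(k) = u. Then in IG(E): (ē_{11} ē_{a,j} ē_{11})(ē_{11} ē_{b,k} ē_{11}) = ē_{11} and (ē_{11} ē_{b,k} ē_{11})(ē_{11} ē_{a,j} ē_{11}) = ē_{11}. (Writing w_u = ē_{11} ē_{a,j} ē_{11} for any choice with a(j) = u⁻¹, this says w_u⁻¹ = w_{u⁻¹} in the maximal subgroup of IG(E) at ē_{11}.) -/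

import Mathlib

/-- An endomorphism of the rank-`n` free left `G`-act `F_n(G) = G × Fin n`
(the formal symbols `g x_i` are the pairs `(g, i)`), where the action is
`h • (g, i) = (h * g, i)` and equivariance says `(h • x) a = h • (x a)`. -/
structure ActEnd (G : Type*) [Group G] (n : ℕ) : Type _ where
  toFun : G × Fin n → G × Fin n
  equivariant : ∀ (h : G) (x : G × Fin n),
    toFun (h * x.1, x.2) = (h * (toFun x).1, (toFun x).2)

namespace ActEnd

variable {G : Type*} [Group G] {n : ℕ}

/-- Composition is written left-to-right: `x (a * b) = (x a) b`. -/
instance : Monoid (ActEnd G n) where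
  mul a b := ⟨fun x => b.toFun (a.toFun x), by
    intro h x
    try dsimp only
    rw [a.equivariant h x, b.equivariant]⟩
  one := ⟨id, fun _ _ => rfl⟩
  mul_assoc _ _ _ := rfl
  one_mul _ := rfl
  mul_one _ := rfl

@[simp] theorem mul_toFun (a b : ActEnd G n) (x : G × Fin n) :
    (a * b).toFun x = b.toFun (a.toFun x) := rfl

theorem ext' {a b : ActEnd G n} (h : a.toFun = b.toFun) : a = b := by
  cases a; cases b; cases h; rfl

/-- The rank of an endomorphism of `F_n(G)`: the number of indices `j` such
that `G x_j` meets the image. -/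
noncomputable def rank (a : ActEnd G n) : ℕ :=
  Nat.card {j : Fin n // ∃ x, (a.toFun x).2 = j}

end ActEnd

namespace ActEnd

variable {G : Type*} [Group G] {n : ℕ}

/-- The rank-1 idempotent `e_{a,j}` given by `(g x_t) e_{a,j} = (g * a t * (a j)⁻¹) x_j`.
Taking `a` constantly `1` gives `e_{1j}`, and also `j = 0` gives `e_{11}`
(indices `1, …, n` are realised as `Fin n`, with `1 ↦ 0`). -/
def eaj (a : Fin n → G) (j : Fin n) : ActEnd G n :=
  ⟨fun x => (x.1 * a x.2 * (a j)⁻¹, j), by intro h x; simp [mul_assoc]⟩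

theorem eaj_idem (a : Fin n → G) (j : Fin n) : eaj a j * eaj a j = eaj a j := by
  apply ext'
  funext x
  simp [eaj, mul_assoc]

/-- The map `a_g : g' x_t ↦ (g' * g) x_1`. -/
def aMap (g : G) (h0 : 0 < n) : ActEnd G n :=
  ⟨fun x => (x.1 * g, ⟨0, h0⟩), by intro h x; simp [mul_assoc]⟩

end ActEnd

/-- The principal left ideal `M a` of `a`. -/
def lIdeal {M : Type*} [Monoid M] (a : M) : Set M := Set.range fun m => m * a

/-- The principal right ideal `a M` of `a`. -/
def rIdeal {M : Type*} [Monoid M] (a : M) : Set M := Set.range fun m => a * m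

/-- The `H`-class of `e`: all elements that are both `L`- and `R`-related to `e`. -/
def hClass {M : Type*} [Monoid M] (e : M) : Set M :=
  {a | lIdeal a = lIdeal e ∧ rIdeal a = rIdeal e}

/-- The defining relation of the free idempotent generated monoid `IG(E)`:
`ē f̄ = (e f)‾` whenever `{e, f} ∩ {e f, f e} ≠ ∅`. -/
def igRel (M : Type*) [Monoid M] :
    FreeMonoid {e : M // e * e = e} → FreeMonoid {e : M // e * e = e} → Prop :=
  fun x y => ∃ e f g : {e : M // e * e = e},
    (e.1 * f.1 = e.1 ∨ e.1 * f.1 = f.1 ∨ f.1 * e.1 = e.1 ∨ f.1 * e.1 = f.1) ∧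
    e.1 * f.1 = g.1 ∧
    x = FreeMonoid.of e * FreeMonoid.of f ∧ y = FreeMonoid.of g

/-- The free idempotent generated monoid over the biordered set of idempotents
of `M`: the presented monoid with generators `ē` for each idempotent `e` and
relations `ē f̄ = (e f)‾` whenever `{e, f} ∩ {e f, f e} ≠ ∅`. -/
abbrev IG (M : Type*) [Monoid M] : Type _ := (conGen (igRel M)).Quotient

/-- The generator `ē` of `IG(E)` corresponding to the idempotent `e`. -/
def ebar {M : Type*} [Monoid M] (e : {e : M // e * e = e}) : IG M :=
  (conGen (igRel M)).mk' (FreeMonoid.of e)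

/-- `ē_{a,j}` as an element of `IG(E)` for `E` the idempotents of `End F_n(G)`. -/
def igE {G : Type*} [Group G] {n : ℕ} (a : Fin n → G) (j : Fin n) : IG (ActEnd G n) :=
  ebar ⟨ActEnd.eaj a j, ActEnd.eaj_idem a j⟩

/-- `ē_{11}` as an element of `IG(E)`. -/
def ig11 {G : Type*} [Group G] {n : ℕ} (h0 : 0 < n) : IG (ActEnd G n) :=
  igE (fun _ => (1 : G)) ⟨0, h0⟩

/-!
Rank-one idempotents `e_{a,j}` of `End F_n(G)` form a Rees matrix semigroup: `j` is the column,
and `a`, taken up to a constant right factor, is the row. In `IG(E)` two rank-one idempotents in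
the same row or the same column multiply as in `End F_n(G)`. Monomial idempotents of higher rank
supply the remaining moves: an idempotent `K` that both factors of `ē f̄` absorb on one side can
be pushed into the other factor. These moves first bring `ē_{11} ē_{a,j} ē_{11}` to the normal
form `ē_{11} ē_{δ,i} ē_{11}`, with `δ` equal to `(a j)⁻¹` at `1` and to `1` elsewhere, in any
column `i ≠ 1`. Placing the normal forms of `w_u` and `w_{u⁻¹}` in two different columns `i ≠ 1`
(here `n ≥ 3` is needed), a chain of such moves collapses their product to `ē_{11}`.
-/

section FreeIdempotentGenerated

variable {M : Type*} [Monoid M] {e f g K : {e : M // e * e = e}}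

theorem ebar_mul_ebar
    (hef : e.1 * f.1 = e.1 ∨ e.1 * f.1 = f.1 ∨ f.1 * e.1 = e.1 ∨ f.1 * e.1 = f.1)
    (hg : e.1 * f.1 = g.1) : ebar e * ebar f = ebar g := by
  rw [ebar, ebar, ← map_mul]
  exact (Con.eq _).mpr (ConGen.Rel.of _ _ ⟨e, f, g, hef, hg, rfl, rfl⟩)

theorem ebar_mul_ebar_of_mul_eq_left (h : e.1 * f.1 = e.1) : ebar e * ebar f = ebar e :=
  ebar_mul_ebar (Or.inl h) h

theorem ebar_mul_ebar_of_mul_eq_right (h : e.1 * f.1 = f.1) : ebar e * ebar f = ebar f :=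
  ebar_mul_ebar (Or.inr (Or.inl h)) h

theorem ebar_mul_ebar_eq_ebar_mul_of_mul_right (heK : e.1 * K.1 = e.1) (hfK : f.1 * K.1 = f.1)
    (hKf : K.1 * f.1 = g.1) : ebar e * ebar f = ebar e * ebar g := by
  calc ebar e * ebar f = ebar e * ebar K * ebar f := by rw [ebar_mul_ebar_of_mul_eq_left heK]
    _ = ebar e * ebar g := by rw [mul_assoc, ebar_mul_ebar (Or.inr (Or.inr (Or.inr hfK))) hKf]

theorem ebar_mul_ebar_eq_mul_ebar_of_mul_left (hKe : K.1 * e.1 = e.1) (hKf : K.1 * f.1 = f.1)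
    (heK : e.1 * K.1 = g.1) : ebar e * ebar f = ebar g * ebar f := by
  calc ebar e * ebar f = ebar e * (ebar K * ebar f) := by rw [ebar_mul_ebar_of_mul_eq_right hKf]
    _ = ebar g * ebar f := by rw [← mul_assoc, ebar_mul_ebar (Or.inr (Or.inr (Or.inl hKe))) heK]

end FreeIdempotentGenerated

theorem mul_mul_eq_of_mul_eq {S : Type*} [Semigroup S] {x y w : S} (h : x * y = w) (r : S) :
    x * (y * r) = w * r := by
  rw [← mul_assoc, h]

namespace ActEnd

variable {G : Type*} [Group G] {n : ℕ}

def monomial (m : Fin n → G) (p : Fin n → Fin n) : ActEnd G n :=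
  ⟨fun x => (x.1 * m x.2, p x.2), fun h x => by simp [mul_assoc]⟩

@[simp] theorem monomial_toFun (m : Fin n → G) (p : Fin n → Fin n) (x : G × Fin n) :
    (monomial m p).toFun x = (x.1 * m x.2, p x.2) := rfl

@[simp] theorem eaj_toFun (a : Fin n → G) (j : Fin n) (x : G × Fin n) :
    (eaj a j).toFun x = (x.1 * a x.2 * (a j)⁻¹, j) := rfl

theorem monomial_mul_self {m : Fin n → G} {p : Fin n → Fin n} (hp : ∀ t, p (p t) = p t)
    (hm : ∀ t, m (p t) = 1) : monomial m p * monomial m p = monomial m p :=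
  ext' <| funext fun x => by simp [hp, hm]

theorem eaj_mul_const (a : Fin n → G) (g : G) (j : Fin n) :
    eaj (fun t => a t * g) j = eaj a j :=
  ext' <| funext fun x => by simp [mul_assoc]

theorem eaj_mul_eaj_same_col (a b : Fin n → G) (j : Fin n) : eaj a j * eaj b j = eaj a j :=
  ext' <| funext fun x => by simp

theorem eaj_mul_eaj_same_row (a : Fin n → G) (j k : Fin n) : eaj a j * eaj a k = eaj a k :=
  ext' <| funext fun x => by simp [mul_assoc]

theorem eaj_mul_monomial {b m : Fin n → G} {q : Fin n → Fin n} {l : Fin n} (hl : q l = l)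
    (hm : m l = 1) : eaj b l * monomial m q = eaj b l :=
  ext' <| funext fun x => by simp [hl, hm]

theorem monomial_mul_eaj {a m : Fin n → G} {q : Fin n → Fin n} {j : Fin n} (hj : q j = j)
    (hm : m j = 1) : monomial m q * eaj a j = eaj (fun t => m t * a (q t)) j :=
  ext' <| funext fun x => by simp [hj, hm, mul_assoc]

theorem monomial_one_mul_eaj {a : Fin n → G} {p : Fin n → Fin n} (ha : ∀ t, a (p t) = a t)
    (j : Fin n) : monomial 1 p * eaj a j = eaj a j :=
  ext' <| funext fun x => by simp [ha, mul_assoc]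

theorem eaj_mul_monomial_one {a : Fin n → G} {p : Fin n → Fin n} {j : Fin n}
    (ha : a (p j) = a j) : eaj a j * monomial 1 p = eaj a (p j) :=
  ext' <| funext fun x => by simp [ha]

end ActEnd

section RankOneGenerators

open ActEnd

variable {G : Type*} [Group G] {n : ℕ}

theorem igE_mul_const (a : Fin n → G) (g : G) (j : Fin n) :
    igE (fun t => a t * g) j = igE a j := by
  simp only [igE, eaj_mul_const]

theorem igE_mul_igE_same_col (a b : Fin n → G) (j : Fin n) : igE a j * igE b j = igE a j :=
  ebar_mul_ebar_of_mul_eq_left (eaj_mul_eaj_same_col a b j)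

theorem igE_mul_igE_same_row (a : Fin n → G) (j k : Fin n) : igE a j * igE a k = igE a k :=
  ebar_mul_ebar_of_mul_eq_right (eaj_mul_eaj_same_row a j k)

theorem igE_mul_igE_retract (m : Fin n → G) {q : Fin n → Fin n} (hq : ∀ t, q (q t) = q t)
    (hm : ∀ t, m (q t) = 1) {a b : Fin n → G} {j l : Fin n} (hl : q l = l) (hj : q j = j) :
    igE b l * igE a j = igE b l * igE (fun t => m t * a (q t)) j :=
  ebar_mul_ebar_eq_ebar_mul_of_mul_right (K := ⟨monomial m q, monomial_mul_self hq hm⟩)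
    (eaj_mul_monomial hl (hl ▸ hm l)) (eaj_mul_monomial hj (hj ▸ hm j))
    (monomial_mul_eaj hj (hj ▸ hm j))

theorem igE_mul_igE_shift {p : Fin n → Fin n} (hp : ∀ t, p (p t) = p t) {a b : Fin n → G}
    (ha : ∀ t, a (p t) = a t) (hb : ∀ t, b (p t) = b t) {j k : Fin n} (hpj : p j = k)
    (l : Fin n) : igE a j * igE b l = igE a k * igE b l :=
  hpj ▸ ebar_mul_ebar_eq_mul_ebar_of_mul_left
    (K := ⟨monomial 1 p, monomial_mul_self hp fun _ => rfl⟩)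
    (monomial_one_mul_eaj ha j) (monomial_one_mul_eaj hb l) (eaj_mul_monomial_one (ha j))

end RankOneGenerators

section Retractions

variable {α : Type*} [DecidableEq α]

def collapseExcept (x y t : α) : α := if t = x then x else y

theorem collapseExcept_idem (x y t : α) :
    collapseExcept x y (collapseExcept x y t) = collapseExcept x y t := by
  unfold collapseExcept; split_ifs <;> simp_all

theorem collapseExcept_left (x y : α) : collapseExcept x y x = x := if_pos rfl

theorem collapseExcept_right (x y : α) : collapseExcept x y y = y := by
  unfold collapseExcept; split_ifs <;> simp_all

theorem update_id_idem (j k t : α) :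
    Function.update id j k (Function.update id j k t) = Function.update id j k t := by
  simp only [Function.update_apply, id]; split_ifs <;> simp_all

end Retractions

section MaximalSubgroup

variable {G : Type*} [Group G] {n : ℕ}

theorem igE_sandwich_eq_mulSingle {z : Fin n} {a : Fin n → G} (ha : a z = 1) (j : Fin n)
    {j' : Fin n} (hj' : j' ≠ z) :
    igE 1 z * igE a j * igE 1 z = igE 1 z * igE (Pi.mulSingle z (a j)⁻¹) j' * igE 1 z := by
  have hnorm : igE 1 z * igE a j = igE 1 z * igE (Pi.mulSingle z (a j)⁻¹) j := by
    rw [igE_mul_igE_retract 1 (collapseExcept_idem z j) (fun _ => rfl) (collapseExcept_left z j)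
      (collapseExcept_right z j), ← igE_mul_const (Pi.mulSingle z (a j)⁻¹) (a j)]
    congr 2; funext t
    by_cases ht : t = z <;> simp [collapseExcept, ht, ha]
  have hshift : igE (Pi.mulSingle z (a j)⁻¹) j * igE 1 z
      = igE (Pi.mulSingle z (a j)⁻¹) j' * igE 1 z := by
    refine igE_mul_igE_shift (update_id_idem j j') (fun t => ?_) (fun _ => rfl)
      (Function.update_self j j' id) z
    by_cases ht : t = j <;> by_cases hjz : j = z <;> simp_all
  rw [hnorm, mul_assoc, hshift, ← mul_assoc]

theorem igE_one_mul_igE_mulSingle_eq {z k : Fin n} (hkz : k ≠ z) (g : G) :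
    igE 1 z * igE (Pi.mulSingle z g⁻¹) k = igE 1 z * igE (Pi.mulSingle k g) k := by
  rw [igE_mul_igE_retract 1 (collapseExcept_idem k z) (fun _ => rfl)
    (collapseExcept_right k z) (collapseExcept_left k z),
    ← igE_mul_const (Pi.mulSingle k g) g⁻¹]
  congr 2; funext t
  by_cases ht : t = k <;> simp [collapseExcept, ht, hkz]

theorem igE_sandwich_mulSingle_mul_sandwich_inv {z j k : Fin n} (hjz : j ≠ z) (hkz : k ≠ z)
    (hjk : j ≠ k) (g : G) :
    igE 1 z * igE (Pi.mulSingle z g) j * igE 1 z *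
      (igE 1 z * igE (Pi.mulSingle z g⁻¹) k * igE 1 z) = igE 1 z := by
  set ε : IG (ActEnd G n) := igE 1 z
  set C : Fin n → G := Pi.mulSingle z g with hC
  set D : Fin n → G := Pi.mulSingle k g with hD
  have hCq : ∀ t, C (collapseExcept k j t) = 1 := fun t => by
    unfold collapseExcept; split_ifs <;> simp [hC, hkz, hjz]
  have h₀ : ε * igE (Pi.mulSingle z g⁻¹) k = ε * igE D k :=
    igE_one_mul_igE_mulSingle_eq hkz g
  have h₁ : igE C j * ε = igE C k * ε :=
    igE_mul_igE_shift (update_id_idem j k)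
      (fun t => by by_cases ht : t = j <;> simp [hC, ht, hjz, hkz]) (fun _ => rfl)
      (Function.update_self j k id) z
  have h₂ : ε * igE D k = igE 1 j * igE D k :=
    igE_mul_igE_shift (update_id_idem z j) (fun _ => rfl)
      (fun t => by by_cases ht : t = z <;> simp [hD, ht, hjk, hkz])
      (Function.update_self z j id) k
  -- The rank-two idempotent `monomial C (collapseExcept k j)` carries the twist by `g`.
  have h₃ : igE 1 j * igE D k = igE 1 j * igE (C * D) k := by
    rw [igE_mul_igE_retract C (collapseExcept_idem k j) hCq (collapseExcept_right k j)
      (collapseExcept_left k j)]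
    congr 2; funext t
    by_cases ht : t = k <;> simp [collapseExcept, hD, ht, hjk]
  have h₄ : igE C k * igE (1 : Fin n → G) j = igE C k * igE C j := by
    simpa only [Pi.one_apply, mul_one] using
      igE_mul_igE_retract C (collapseExcept_idem k j) hCq (a := 1)
      (collapseExcept_left k j) (collapseExcept_right k j)
  have h₅ : igE (C * D) k * ε = igE (C * D) z * ε :=
    igE_mul_igE_shift (update_id_idem k z)
      (fun t => by by_cases ht : t = k <;> simp [hC, hD, ht, hkz]) (fun _ => rfl)
      (Function.update_self k z id) z
  have h₆ : igE C j * igE (C * D) z = igE C j * igE C z := by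
    rw [igE_mul_igE_retract 1 (collapseExcept_idem z j) (fun _ => rfl)
      (collapseExcept_right z j) (collapseExcept_left z j)]
    congr 2; funext t
    by_cases ht : t = z <;> simp [collapseExcept, hC, hD, ht, hjz, hjk, hkz]
  have hε : ε * ε = ε := igE_mul_igE_same_col 1 1 z
  calc ε * igE C j * ε * (ε * igE (Pi.mulSingle z g⁻¹) k * ε)
      = ε * (igE C j * (ε * (igE D k * ε))) := by
        simp only [mul_assoc, mul_mul_eq_of_mul_eq hε, mul_mul_eq_of_mul_eq h₀]
    _ = ε * (igE C k * (ε * (igE D k * ε))) := by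
        simp only [mul_mul_eq_of_mul_eq h₁, mul_assoc]
    _ = ε * (igE C k * (igE 1 j * (igE D k * ε))) := by
        simp only [mul_mul_eq_of_mul_eq h₂, mul_assoc]
    _ = ε * (igE C k * (igE 1 j * (igE (C * D) k * ε))) := by
        simp only [mul_mul_eq_of_mul_eq h₃, mul_assoc]
    _ = ε * (igE C k * (igE C j * (igE (C * D) k * ε))) := by
        simp only [mul_mul_eq_of_mul_eq h₄, mul_assoc]
    _ = ε * (igE C j * (igE (C * D) z * ε)) := by
        rw [mul_mul_eq_of_mul_eq (igE_mul_igE_same_row C k j), h₅]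
    _ = ε * igE C z := by
        rw [igE_mul_igE_same_col, h₆, igE_mul_igE_same_row]
    _ = ε := igE_mul_igE_same_col 1 C z

end MaximalSubgroup

/-- Writing `w_u = ē_{11} ē_{a,j} ē_{11}` for any choice with `a j = u⁻¹`,
we have `w_u w_{u⁻¹} = w_{u⁻¹} w_u = ē_{11}` in `IG(E)`: `w_u⁻¹ = w_{u⁻¹}` in
the maximal subgroup at `ē_{11}`. -/
theorem stmt18 {G : Type*} [Group G] {n : ℕ} (hn : 3 ≤ n) (u : G)
    (a b : Fin n → G) (ha : a ⟨0, by omega⟩ = 1) (hb : b ⟨0, by omega⟩ = 1)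
    (j k : Fin n) (hu : a j = u⁻¹) (hbu : b k = u) :
    (ig11 (G := G) (n := n) (by omega) * igE a j * ig11 (G := G) (n := n) (by omega)) *
        (ig11 (G := G) (n := n) (by omega) * igE b k * ig11 (G := G) (n := n) (by omega)) = ig11 (G := G) (n := n) (by omega) ∧
    (ig11 (G := G) (n := n) (by omega) * igE b k * ig11 (G := G) (n := n) (by omega)) *
        (ig11 (G := G) (n := n) (by omega) * igE a j * ig11 (G := G) (n := n) (by omega)) = ig11 (G := G) (n := n) (by omega) := by
  let z : Fin n := ⟨0, by omega⟩
  let j' : Fin n := ⟨1, by omega⟩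
  let k' : Fin n := ⟨2, by omega⟩
  have hj' : j' ≠ z := by simp [j', z, Fin.ext_iff]
  have hk' : k' ≠ z := by simp [k', z, Fin.ext_iff]
  have hjk' : j' ≠ k' := by simp [j', k', Fin.ext_iff]
  change igE 1 z * igE a j * igE 1 z * (igE 1 z * igE b k * igE 1 z) = igE 1 z ∧
    igE 1 z * igE b k * igE 1 z * (igE 1 z * igE a j * igE 1 z) = igE 1 z
  rw [igE_sandwich_eq_mulSingle ha j hj', igE_sandwich_eq_mulSingle hb k hk', hu, hbu,
    inv_inv]
  refine ⟨igE_sandwich_mulSingle_mul_sandwich_inv hj' hk' hjk' u, ?_⟩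
  simpa only [inv_inv] using igE_sandwich_mulSingle_mul_sandwich_inv hk' hj' hjk'.symm u⁻¹
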